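/- For every compact interval [a,b] ⊂ (0,1) there exist d⋆ > 0 and C > 0 such that for every d ∈ (0, d⋆), every μ ∈ [a,b], and every pattern σ : ℤ → {0,1}, there exists a bounded sequence U : ℤ → ℝ satisfying the discrete Nagumo steady-state equation 0 = d(U_{n+1} + U_{n−1} − 2U_n) + U_n(U_n − μ)(1 − U_n) for all n ∈ ℤ with sup_{n∈ℤ} |U_n − σ_n| ≤ C·d. Moreover, if σ_n = 0 for all but finitely many n, then the resulting solution satisfies U_n → 0 as |n| → ∞ (so in particular, patterns σ with exactly k ≥ 2 maximal finite blocks of consecutive 1's, separated by blocks of 0's, yield k-pulse localized steady states for all sufficiently small d > 0). -/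

import Mathlib

/-!
At `d = 0` every `{0,1}`-pattern `σ` is a solution, and both roots are nondegenerate: the
linearization of `f x = x (x - μ) (1 - x)` at `σ n` is multiplication by `-β n`, where
`β n ∈ {μ, 1 - μ}` stays at least `m = min a (1 - b)` for `μ ∈ [a, b]`. Writing `U = σ + V`, the
equation becomes `V = (d Δ(σ + V) + R(V)) / β` with `R` quadratic in `V`, and for small `d` this
map is a contraction of the ball of radius `C d` in `ℓ^∞`; its fixed point is the solution.

If `σ` has finite support, then `|U n| ≤ C d` away from it. Wherever `U` is small at `n - 1`, `n`,
`n + 1`, the equation gives `|U n| μ / 2 ≤ |f (U n)| = d |ΔU n| ≤ 4 d sup |U|`, so the bound halves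
with each step away from the support and `U n → 0`.
-/

open Filter Topology
open scoped BoundedContinuousFunction

def discreteLaplacian (U : ℤ → ℝ) (n : ℤ) : ℝ := U (n + 1) + U (n - 1) - 2 * U n

def IsNagumoSteadyState (d μ : ℝ) (U : ℤ → ℝ) : Prop :=
  ∀ n, 0 = d * discreteLaplacian U n + U n * (U n - μ) * (1 - U n)

lemma abs_discreteLaplacian_le {U : ℤ → ℝ} {n : ℤ} {t : ℝ} (hprev : |U (n - 1)| ≤ t)
    (hn : |U n| ≤ t) (hnext : |U (n + 1)| ≤ t) : |discreteLaplacian U n| ≤ 4 * t := by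
  rw [abs_le] at *
  unfold discreteLaplacian
  constructor <;> linarith

/- For `s ∈ {0, 1}` the coefficient `μ + (1 - 2 μ) s` is `-f'(s)`, where
`f x = x (x - μ) (1 - x)`, so this is the superlinear part of `v ↦ f (s + v)`. -/
def nagumoRemainder (μ s v : ℝ) : ℝ :=
  (s + v) * (s + v - μ) * (1 - (s + v)) + (μ + (1 - 2 * μ) * s) * v

section nagumoRemainder

variable {μ s v w r : ℝ}

lemma nagumoRemainder_zero (hs : s = 0 ∨ s = 1) : nagumoRemainder μ s 0 = 0 := by
  rcases hs with rfl | rfl <;> simp [nagumoRemainder]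

lemma abs_nagumoRemainder_sub_le (hs : s = 0 ∨ s = 1) (hμ0 : 0 ≤ μ) (hμ1 : μ ≤ 1)
    (hr : r ≤ 1) (hv : |v| ≤ r) (hw : |w| ≤ r) :
    |nagumoRemainder μ s v - nagumoRemainder μ s w| ≤ 7 * r * |v - w| := by
  rw [abs_le] at hv hw
  rcases hs with rfl | rfl
  · have hfactor : nagumoRemainder μ 0 v - nagumoRemainder μ 0 w
        = ((v + w) * (1 + μ) - (v ^ 2 + v * w + w ^ 2)) * (v - w) := by
      unfold nagumoRemainder; ring
    rw [hfactor, abs_mul]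
    gcongr
    rw [abs_le]
    constructor <;> nlinarith [sq_nonneg (v + w), sq_nonneg (v - w)]
  · have hfactor : nagumoRemainder μ 1 v - nagumoRemainder μ 1 w
        = (-(v + w) * (2 - μ) - (v ^ 2 + v * w + w ^ 2)) * (v - w) := by
      unfold nagumoRemainder; ring
    rw [hfactor, abs_mul]
    gcongr
    rw [abs_le]
    constructor <;> nlinarith [sq_nonneg (v + w), sq_nonneg (v - w)]

lemma abs_nagumoRemainder_le (hs : s = 0 ∨ s = 1) (hμ0 : 0 ≤ μ) (hμ1 : μ ≤ 1)
    (hr : r ≤ 1) (hv : |v| ≤ r) : |nagumoRemainder μ s v| ≤ 7 * r * r := by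
  have hr0 : 0 ≤ r := (abs_nonneg v).trans hv
  have h := abs_nagumoRemainder_sub_le hs hμ0 hμ1 hr hv (w := 0) (by simpa using hr0)
  rw [nagumoRemainder_zero hs, sub_zero, sub_zero] at h
  exact h.trans (by gcongr)

end nagumoRemainder

theorem exists_fixedPoint_of_sup_contracting {ι : Type*} (G : (ι → ℝ) → ι → ℝ) {r κ : ℝ}
    (hr : 0 ≤ r) (hκ0 : 0 ≤ κ) (hκ : κ < 1)
    (hmaps : ∀ V : ι → ℝ, (∀ i, |V i| ≤ r) → ∀ i, |G V i| ≤ r)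
    (hlip : ∀ V W : ι → ℝ, (∀ i, |V i| ≤ r) → (∀ i, |W i| ≤ r) →
      ∀ δ, (∀ i, |V i - W i| ≤ δ) → ∀ i, |G V i - G W i| ≤ κ * δ) :
    ∃ V : ι → ℝ, (∀ i, |V i| ≤ r) ∧ G V = V := by
  let _ : TopologicalSpace ι := ⊥
  have : DiscreteTopology ι := ⟨rfl⟩
  let ball := Metric.closedBall (0 : ι →ᵇ ℝ) r
  have mem_ball (V : ι →ᵇ ℝ) : V ∈ ball ↔ ∀ i, |V i| ≤ r := by
    rw [mem_closedBall_zero_iff, BoundedContinuousFunction.norm_le hr]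
    rfl
  have : CompleteSpace ball := Metric.isClosed_closedBall.completeSpace_coe
  have : Nonempty ball := ⟨⟨0, Metric.mem_closedBall_self hr⟩⟩
  let F : ball → ball := fun V =>
    ⟨.ofNormedAddCommGroupDiscrete (G V) r (hmaps V ((mem_ball V).1 V.2)),
      (mem_ball _).2 (hmaps V ((mem_ball V).1 V.2))⟩
  have hF : ContractingWith ⟨κ, hκ0⟩ F := by
    refine ⟨hκ, LipschitzWith.of_dist_le_mul fun V W => ?_⟩
    rw [Subtype.dist_eq, Subtype.dist_eq, BoundedContinuousFunction.dist_le (by positivity)]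
    exact hlip V W ((mem_ball V).1 V.2) ((mem_ball W).1 W.2) _
      fun j => by simpa [Real.dist_eq] using (V : ι →ᵇ ℝ).dist_coe_le_dist (g := W) j
  let V := ContractingWith.fixedPoint F hF
  exact ⟨⇑(V : ι →ᵇ ℝ), (mem_ball _).1 V.2,
    congrArg (fun V : ball => ⇑(V : ι →ᵇ ℝ)) hF.fixedPoint_isFixedPt⟩

theorem exists_isNagumoSteadyState_near_pattern {d μ m r : ℝ} {σ : ℤ → ℝ}
    (hσ : ∀ n, σ n = 0 ∨ σ n = 1) (hm : 0 < m) (hmμ : m ≤ μ) (hmμ' : m ≤ 1 - μ)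
    (hd : 0 ≤ d) (hr : 0 ≤ r) (hr1 : r ≤ 1)
    (hmaps : (4 + 4 * r) * d + 7 * r * r ≤ m * r) (hcontr : 4 * d + 7 * r < m) :
    ∃ U, IsNagumoSteadyState d μ U ∧ ∀ n, |U n - σ n| ≤ r := by
  have hμ0 : 0 ≤ μ := by linarith
  have hμ1 : μ ≤ 1 := by linarith
  set β : ℤ → ℝ := fun n => μ + (1 - 2 * μ) * σ n
  have hβ (n : ℤ) : m ≤ β n := by rcases hσ n with h | h <;> simp only [β, h] <;> linarith
  have abs_div_β_le (x : ℝ) (n : ℤ) : |x / β n| ≤ |x| / m := by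
    rw [abs_div, abs_of_pos (hm.trans_le (hβ n))]
    gcongr
    exact hβ n
  let G : (ℤ → ℝ) → ℤ → ℝ := fun V n =>
    (d * discreteLaplacian (σ + V) n + nagumoRemainder μ (σ n) (V n)) / β n
  have G_maps (V : ℤ → ℝ) (hV : ∀ k, |V k| ≤ r) (n : ℤ) : |G V n| ≤ r := by
    have hσV (k : ℤ) : |(σ + V) k| ≤ 1 + r :=
      (abs_add_le _ _).trans (add_le_add (by rcases hσ k with h | h <;> simp [h]) (hV k))
    have hΔ := abs_discreteLaplacian_le (hσV (n - 1)) (hσV n) (hσV (n + 1))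
    calc |G V n| ≤ (d * (4 * (1 + r)) + 7 * r * r) / m := by
          refine (abs_div_β_le _ n).trans ?_
          gcongr
          refine (abs_add_le _ _).trans (add_le_add ?_
            (abs_nagumoRemainder_le (hσ n) hμ0 hμ1 hr1 (hV n)))
          rw [abs_mul, abs_of_nonneg hd]
          gcongr
      _ ≤ r := by rw [div_le_iff₀ hm]; linarith
  have G_lipschitz (V W : ℤ → ℝ) (hV : ∀ k, |V k| ≤ r) (hW : ∀ k, |W k| ≤ r) (δ : ℝ)
      (hδ : ∀ k, |V k - W k| ≤ δ) (n : ℤ) : |G V n - G W n| ≤ (4 * d + 7 * r) / m * δ := by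
    have hΔ := abs_discreteLaplacian_le (U := V - W) (hδ (n - 1)) (hδ n) (hδ (n + 1))
    calc |G V n - G W n|
        = |(d * discreteLaplacian (V - W) n
            + (nagumoRemainder μ (σ n) (V n) - nagumoRemainder μ (σ n) (W n))) / β n| := by
          simp only [G, discreteLaplacian, Pi.add_apply, Pi.sub_apply]
          ring_nf
      _ ≤ (d * (4 * δ) + 7 * r * δ) / m := by
          refine (abs_div_β_le _ n).trans ?_
          gcongr
          refine (abs_add_le _ _).trans (add_le_add ?_
            ((abs_nagumoRemainder_sub_le (hσ n) hμ0 hμ1 hr1 (hV n) (hW n)).trans ?_))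
          · rw [abs_mul, abs_of_nonneg hd]
            gcongr
          · gcongr
            exact hδ n
      _ = (4 * d + 7 * r) / m * δ := by ring
  obtain ⟨V, hVr, hV⟩ := exists_fixedPoint_of_sup_contracting G hr (by positivity)
    ((div_lt_one hm).2 hcontr) G_maps G_lipschitz
  refine ⟨σ + V, fun n => ?_, fun n => by simpa using hVr n⟩
  have h := congrFun hV n
  simp only [G, div_eq_iff (hm.trans_le (hβ n)).ne', nagumoRemainder, β] at h
  simp only [Pi.add_apply]
  linear_combination -h

section decay

variable {d μ t : ℝ} {U : ℤ → ℝ}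

lemma abs_le_half_of_isNagumoSteadyState {n : ℤ} (hU : IsNagumoSteadyState d μ U)
    (hμ0 : 0 < μ) (hμ1 : μ ≤ 1) (hd : 0 ≤ d) (hdμ : d ≤ μ / 16) (htμ : t ≤ μ / 4)
    (hprev : |U (n - 1)| ≤ t) (hn : |U n| ≤ t) (hnext : |U (n + 1)| ≤ t) : |U n| ≤ t / 2 := by
  have hf : |U n| * |U n - μ| * |1 - U n| ≤ d * (4 * t) := by
    rw [← abs_mul, ← abs_mul, show U n * (U n - μ) * (1 - U n) = -(d * discreteLaplacian U n)
      by linarith [hU n], abs_neg, abs_mul, abs_of_nonneg hd]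
    gcongr
    exact abs_discreteLaplacian_le hprev hn hnext
  have hn' := abs_le.1 hn
  have hμU : 3 * μ / 4 ≤ |U n - μ| := by rw [abs_sub_comm]; exact le_abs.2 (Or.inl (by linarith))
  have h1U : 3 / 4 ≤ |1 - U n| := le_abs.2 (Or.inl (by linarith))
  have hlower : |U n| * (3 * μ / 4) * (3 / 4) ≤ |U n| * |U n - μ| * |1 - U n| := by gcongr
  nlinarith [abs_nonneg (U n)]

theorem tendsto_cofinite_zero_of_isNagumoSteadyState (hU : IsNagumoSteadyState d μ U)
    (hμ0 : 0 < μ) (hμ1 : μ ≤ 1) (hd : 0 ≤ d) (hdμ : d ≤ μ / 16) (htμ : t ≤ μ / 4)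
    (hsmall : ∀ᶠ n in cofinite, |U n| ≤ t) : Tendsto U cofinite (𝓝 0) := by
  obtain ⟨n₀, hn₀⟩ := hsmall.exists
  have ht : 0 ≤ t := (abs_nonneg _).trans hn₀
  have hhalve (k : ℕ) : ∀ᶠ n in cofinite, |U n| ≤ t / 2 ^ k := by
    induction k with
    | zero => simpa using hsmall
    | succ k ih =>
      have hnext := (add_left_injective (1 : ℤ)).tendsto_cofinite.eventually ih
      have hprev := (sub_left_injective (b := (1 : ℤ))).tendsto_cofinite.eventually ih
      filter_upwards [ih, hnext, hprev] with n hn hnext hprev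
      rw [pow_succ, ← div_div]
      exact abs_le_half_of_isNagumoSteadyState hU hμ0 hμ1 hd hdμ
        ((div_le_self ht (one_le_pow₀ one_le_two)).trans htμ) hprev hn hnext
  rw [Metric.tendsto_nhds]
  intro ε hε
  obtain ⟨k, hk⟩ := ((tendsto_const_nhds (x := t)).div_atTop
    (tendsto_pow_atTop_atTop_of_one_lt one_lt_two)).eventually (gt_mem_nhds hε) |>.exists
  filter_upwards [hhalve k] with n hn
  rw [Real.dist_0_eq_abs]
  linarith

end decay

lemma eventually_nhds_zero_mul_lt (K : ℝ) {c : ℝ} (hc : 0 < c) : ∀ᶠ d in 𝓝 (0 : ℝ), K * d < c :=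
  ((continuous_const_mul K).tendsto' 0 0 (mul_zero K)).eventually (gt_mem_nhds hc)

theorem statement14_general (a b : ℝ) (ha : 0 < a) (hb : b < 1) :
    ∃ dstar > (0 : ℝ), ∃ C > (0 : ℝ),
      ∀ d ∈ Set.Ioo (0 : ℝ) dstar, ∀ μ ∈ Set.Icc a b,
        ∀ σ : ℤ → ℝ, (∀ n : ℤ, σ n = 0 ∨ σ n = 1) →
          ∃ U : ℤ → ℝ, (∃ B : ℝ, ∀ n : ℤ, |U n| ≤ B) ∧
            (∀ n : ℤ, 0 = d * (U (n + 1) + U (n - 1) - 2 * U n)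
                + U n * (U n - μ) * (1 - U n)) ∧
            (∀ n : ℤ, |U n - σ n| ≤ C * d) ∧
            ({n : ℤ | σ n ≠ 0}.Finite →
              Filter.Tendsto U Filter.cofinite (nhds 0)) := by
  set m := min a (1 - b)
  have hm : 0 < m := lt_min ha (by linarith)
  -- With `r = C d`, the self-map condition `(4 + 4 r) d + 7 r² ≤ m r` reads `(4 C + 7 C²) d ≤ 12`.
  set C := 16 / m
  have hCm : C * m = 16 := div_mul_cancel₀ _ hm.ne'
  obtain ⟨dstar, hdstar, hsmall⟩ := Metric.eventually_nhds_iff.1 <|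
    (eventually_nhds_zero_mul_lt (4 * C + 7 * C * C) (by norm_num : (0 : ℝ) < 12)).and <|
    (eventually_nhds_zero_mul_lt (4 + 7 * C) hm).and <|
    (eventually_nhds_zero_mul_lt C one_pos).and <|
    (eventually_nhds_zero_mul_lt C (by positivity : 0 < a / 4)).and
    (eventually_nhds_zero_mul_lt 1 (by positivity : 0 < a / 16))
  refine ⟨dstar, hdstar, C, by positivity, fun d ⟨hd0, hd⟩ μ ⟨hμa, hμb⟩ σ hσ => ?_⟩
  obtain ⟨hmaps, hcontr, hr1, hra, hda⟩ := hsmall (by rwa [Real.dist_0_eq_abs, abs_of_pos hd0])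
  have hmμ : m ≤ μ := (min_le_left _ _).trans hμa
  have hmμ' : m ≤ 1 - μ := (min_le_right _ _).trans (by linarith)
  obtain ⟨U, hU, hUσ⟩ := exists_isNagumoSteadyState_near_pattern hσ hm hmμ hmμ' hd0.le
    (by positivity) hr1.le (by nlinarith) (by linarith)
  refine ⟨U, ⟨1 + C * d, fun n => ?_⟩, hU, hUσ, fun hfin => ?_⟩
  · have hσ1 : |σ n| ≤ 1 := by rcases hσ n with h | h <;> simp [h]
    linarith [abs_sub_abs_le_abs_sub (U n) (σ n), hUσ n]
  · refine tendsto_cofinite_zero_of_isNagumoSteadyState hU (ha.trans_le hμa) (by linarith)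
      hd0.le (by linarith) (t := C * d) (by linarith) ?_
    filter_upwards [hfin.eventually_cofinite_notMem] with n hn
    simpa [not_not.1 hn] using hUσ n

/-- For every compact interval `[a,b] ⊂ (0,1)` there exist
`d⋆ > 0` and `C > 0` such that for every `d ∈ (0,d⋆)`, `μ ∈ [a,b]`, and every
`{0,1}`-valued pattern `σ : ℤ → ℝ`, there is a bounded solution `U` of the
discrete Nagumo steady-state equation with `sup_n |U_n − σ_n| ≤ C·d`; moreover,
if `σ_n = 0` for all but finitely many `n`, then `U_n → 0` as `|n| → ∞`. -/
theorem statement14 (a b : ℝ) (ha : 0 < a) (hab : a ≤ b) (hb : b < 1) :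
    ∃ dstar > (0 : ℝ), ∃ C > (0 : ℝ),
      ∀ d ∈ Set.Ioo (0 : ℝ) dstar, ∀ μ ∈ Set.Icc a b,
        ∀ σ : ℤ → ℝ, (∀ n : ℤ, σ n = 0 ∨ σ n = 1) →
          ∃ U : ℤ → ℝ, (∃ B : ℝ, ∀ n : ℤ, |U n| ≤ B) ∧
            (∀ n : ℤ, 0 = d * (U (n + 1) + U (n - 1) - 2 * U n)
                + U n * (U n - μ) * (1 - U n)) ∧
            (∀ n : ℤ, |U n - σ n| ≤ C * d) ∧
            ({n : ℤ | σ n ≠ 0}.Finite →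
              Filter.Tendsto U Filter.cofinite (nhds 0)) :=
  statement14_general a b ha hb
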